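/- The closure of an open, w-convex, proper subset of the round 2-sphere S² is again a proper subset of S². Equivalently: if C is an open, w-convex subset of S² whose closure is all of S², then C = S². -/

import Mathlib

/-!
Suppose `closure C = S²` and `p ∈ S² \ C`. The reflection `R` in the line `ℝ p` (the half-turn
about the axis through `p`) is a homeomorphism preserving `S²`, so `C ∩ R⁻¹ C` is again relatively
open and dense in `S²`; pick `q` in it with `⟪p, q⟫ > 0`. The midpoint of any minimizing geodesic
between unit vectors `x`, `y` with `x + y ≠ 0` is `(x + y) / ‖x + y‖`, and `q + R q = 2 ⟪p, q⟫ p`,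
so the midpoint of the geodesic from `q` to `R q` that w-convexity places inside `C` is `p`.
-/

notation "⟪" x ", " y "⟫_ℝ" => @inner ℝ _ _ x y

/-- The intrinsic (angular) distance on the unit sphere. -/
noncomputable def sphDist (x y : EuclideanSpace ℝ (Fin 3)) : ℝ := Real.arccos ⟪x, y⟫_ℝ

/-- `γ` is a minimizing geodesic segment from `x` to `y` in the round unit 2-sphere. -/
def IsMinGeodesic (x y : EuclideanSpace ℝ (Fin 3)) (γ : ℝ → EuclideanSpace ℝ (Fin 3)) : Prop :=
  (∀ t ∈ Set.Icc (0 : ℝ) (sphDist x y), γ t ∈ Metric.sphere (0 : EuclideanSpace ℝ (Fin 3)) 1) ∧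
  γ 0 = x ∧ γ (sphDist x y) = y ∧
  ∀ s ∈ Set.Icc (0 : ℝ) (sphDist x y), ∀ t ∈ Set.Icc (0 : ℝ) (sphDist x y),
    sphDist (γ s) (γ t) = |s - t|

/-- `D` is w-convex: any two points of `D` are joined by some minimizing geodesic inside `D`. -/
def WConvex (D : Set (EuclideanSpace ℝ (Fin 3))) : Prop :=
  ∀ x ∈ D, ∀ y ∈ D, ∃ γ : ℝ → EuclideanSpace ℝ (Fin 3),
    IsMinGeodesic x y γ ∧ ∀ t ∈ Set.Icc (0 : ℝ) (sphDist x y), γ t ∈ D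

open Real Set Metric

lemma add_reflection_span_singleton {F : Type*} [NormedAddCommGroup F] [InnerProductSpace ℝ F]
    {p : F} (hp : ‖p‖ = 1) (q : F) :
    q + (ℝ ∙ p).reflection q = (2 * ⟪p, q⟫_ℝ) • p := by
  rw [Submodule.reflection_singleton_apply, hp]
  simp only [RCLike.ofReal_real_eq_id, id, one_pow, div_one]
  module

lemma subset_closure_inter_preimage {X : Type*} [TopologicalSpace X] {S C : Set X} (f : X ≃ₜ X)
    (hfS : f ⁻¹' S = S) (hCS : C ⊆ S) (hC : IsOpen ((↑) ⁻¹' C : Set S)) (hcl : closure C = S) :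
    S ⊆ closure (C ∩ f ⁻¹' C) := by
  set D := f ⁻¹' C
  obtain ⟨U, hU, hUC⟩ := isOpen_induced_iff.mp hC
  have hUS : U ∩ S = C := by
    rw [Subtype.preimage_coe_eq_preimage_coe_iff, inter_eq_right.mpr hCS] at hUC
    rw [inter_comm, hUC]
  have hDS : D ⊆ S := hfS ▸ preimage_mono hCS
  have hclD : closure D = S := by rw [← f.preimage_closure, hcl, hfS]
  calc S = closure (U ∩ S) := by rw [hUS, hcl]
    _ ⊆ closure (closure (U ∩ D)) := closure_mono (hclD ▸ hU.inter_closure)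
    _ = closure (C ∩ D) := by rw [closure_closure, ← hUS, inter_assoc, inter_eq_right.mpr hDS]

lemma sphDist_nonneg (x y : EuclideanSpace ℝ (Fin 3)) : 0 ≤ sphDist x y := arccos_nonneg _

lemma sphDist_le_pi (x y : EuclideanSpace ℝ (Fin 3)) : sphDist x y ≤ π := arccos_le_pi _

lemma sphDist_half_mem_Icc (x y : EuclideanSpace ℝ (Fin 3)) :
    sphDist x y / 2 ∈ Icc 0 (sphDist x y) :=
  ⟨by linarith [sphDist_nonneg x y], half_le_self (sphDist_nonneg x y)⟩

lemma real_inner_eq_cos_sphDist {x y : EuclideanSpace ℝ (Fin 3)} (hx : ‖x‖ = 1) (hy : ‖y‖ = 1) :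
    ⟪x, y⟫_ℝ = cos (sphDist x y) := by
  have h := abs_le.mp (abs_real_inner_le_norm x y)
  rw [hx, hy, one_mul] at h
  exact (cos_arccos h.1 h.2).symm

namespace IsMinGeodesic

variable {x y : EuclideanSpace ℝ (Fin 3)} {γ : ℝ → EuclideanSpace ℝ (Fin 3)} {t : ℝ}

lemma norm_apply (hγ : IsMinGeodesic x y γ) (ht : t ∈ Icc 0 (sphDist x y)) : ‖γ t‖ = 1 :=
  mem_sphere_zero_iff_norm.mp (hγ.1 t ht)

lemma inner_apply_left (hγ : IsMinGeodesic x y γ) (hx : ‖x‖ = 1) (ht : t ∈ Icc 0 (sphDist x y)) :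
    ⟪x, γ t⟫_ℝ = cos t := by
  have h := hγ.2.2.2 0 ⟨le_rfl, ht.1.trans ht.2⟩ t ht
  rw [hγ.2.1, zero_sub, abs_neg, abs_of_nonneg ht.1] at h
  rw [real_inner_eq_cos_sphDist hx (hγ.norm_apply ht), h]

lemma inner_apply_right (hγ : IsMinGeodesic x y γ) (hy : ‖y‖ = 1) (ht : t ∈ Icc 0 (sphDist x y)) :
    ⟪γ t, y⟫_ℝ = cos (sphDist x y - t) := by
  have h := hγ.2.2.2 t ht (sphDist x y) ⟨ht.1.trans ht.2, le_rfl⟩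
  rw [hγ.2.2.1, abs_sub_comm, abs_of_nonneg (sub_nonneg.mpr ht.2)] at h
  rw [real_inner_eq_cos_sphDist (hγ.norm_apply ht) hy, h]

lemma apply_half (hγ : IsMinGeodesic x y γ) (hx : ‖x‖ = 1) (hy : ‖y‖ = 1) (hxy : x + y ≠ 0) :
    γ (sphDist x y / 2) = ‖x + y‖⁻¹ • (x + y) := by
  set d := sphDist x y
  have hd : d / 2 ∈ Icc 0 d := sphDist_half_mem_Icc x y
  have hc : 0 ≤ cos (d / 2) :=
    cos_nonneg_of_mem_Icc ⟨by linarith [pi_pos, hd.1], by linarith [sphDist_le_pi x y]⟩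
  have hxm := hγ.inner_apply_left hx hd
  have hmy := hγ.inner_apply_right hy hd
  rw [sub_half] at hmy
  have hxy' : ⟪x, y⟫_ℝ = 2 * cos (d / 2) ^ 2 - 1 := by
    rw [real_inner_eq_cos_sphDist hx hy, cos_sq, mul_div_cancel₀ _ two_ne_zero]; ring
  have hnorm : ‖x + y‖ = 2 * cos (d / 2) := by
    refine (sq_eq_sq₀ (norm_nonneg _) (by positivity)).mp ?_
    rw [norm_add_sq_real, hx, hy, hxy']; ring
  have hinner : ⟪γ (d / 2), x + y⟫_ℝ = ‖γ (d / 2)‖ * ‖x + y‖ := by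
    rw [inner_add_right, real_inner_comm, hxm, hmy, hγ.norm_apply hd, hnorm]; ring
  rw [inner_eq_norm_mul_iff_real, hγ.norm_apply hd, one_smul] at hinner
  exact (eq_inv_smul_iff₀ (norm_ne_zero_iff.mpr hxy)).mpr hinner

end IsMinGeodesic

/-- Since the sphere is closed in the ambient space, the closure of `C ⊆ S²` in the subspace
topology is its ambient closure. -/
theorem stmt_3 (C : Set (EuclideanSpace ℝ (Fin 3)))
    (hsub : C ⊆ Metric.sphere 0 1)
    (hopen : IsOpen ((↑) ⁻¹' C : Set (Metric.sphere (0 : EuclideanSpace ℝ (Fin 3)) 1)))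
    (hconv : WConvex C)
    (hproper : C ≠ Metric.sphere 0 1) :
    closure C ≠ Metric.sphere (0 : EuclideanSpace ℝ (Fin 3)) 1 := by
  intro hcl
  obtain ⟨p, hpS, hpC⟩ := not_subset.mp fun h => hproper (hsub.antisymm h)
  have hp : ‖p‖ = 1 := mem_sphere_zero_iff_norm.mp hpS
  set R := (ℝ ∙ p).reflection
  have hRS : R.toHomeomorph ⁻¹' sphere 0 1 = sphere 0 1 := by simp [R.preimage_sphere]
  obtain ⟨q, hpq, hqC, hRqC⟩ := _root_.mem_closure_iff.mp
    (subset_closure_inter_preimage R.toHomeomorph hRS hsub hopen hcl hpS) {z | 0 < ⟪p, z⟫_ℝ}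
    (isOpen_lt continuous_const (by fun_prop)) (by simp [hp])
  obtain ⟨γ, hγ, hγC⟩ := hconv q hqC (R q) hRqC
  have hq : ‖q‖ = 1 := mem_sphere_zero_iff_norm.mp (hsub hqC)
  have hc : 0 < 2 * ⟪p, q⟫_ℝ := mul_pos two_pos hpq
  have hsum : q + R q = (2 * ⟪p, q⟫_ℝ) • p := add_reflection_span_singleton hp q
  have hsum0 : q + R q ≠ 0 := hsum ▸ smul_ne_zero hc.ne' (ne_of_mem_sphere hpS one_ne_zero)
  have hmid : γ (sphDist q (R q) / 2) = p := by
    rw [hγ.apply_half hq (by rw [R.norm_map, hq]) hsum0, hsum, norm_smul, hp, mul_one,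
      Real.norm_of_nonneg hc.le, inv_smul_smul₀ hc.ne']
  exact hpC (hmid ▸ hγC _ (sphDist_half_mem_Icc q (R q)))
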